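/- Strong bisimilarity is finer than winner equivalence: if v and v' are strongly bisimilar vertices of a parity game, then v and v' are won by the same player. Moreover, given a winning strategy for player i from v, there is a winning strategy for player i from v'. -/
import Mathlib


open scoped Classical

universe u

/-- `v →_R w`: an edge whose endpoints are `R`-related. -/
def StepR {V : Type u} (E R : V → V → Prop) (v w : V) : Prop := E v w ∧ R v w

/-- `v ⟹_R w`: reflexive-transitive closure of `→_R`. -/
def MStepR {V : Type u} (E R : V → V → Prop) : V → V → Prop :=
  Relation.ReflTransGen (StepR E R)

/-- `v` is `R`-divergent: an infinite path from `v` staying `R`-related to `v`. -/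
def DivR {V : Type u} (E R : V → V → Prop) (v : V) : Prop :=
  ∃ p : ℕ → V, p 0 = v ∧ (∀ i, E (p i) (p (i + 1))) ∧ ∀ i, R v (p i)

/-- `R` is a stuttering bisimulation on the parity game `(E, prio, owner)`. -/
def IsStutBisim {V : Type u} (E : V → V → Prop) (prio : V → ℕ) (owner : V → Bool)
    (R : V → V → Prop) : Prop :=
  Symmetric R ∧ ∀ v v', R v v' →
    prio v = prio v' ∧ owner v = owner v' ∧ (DivR E R v ↔ DivR E R v') ∧
    ∀ u, E v u → (R v u ∧ R u v') ∨
      ∃ u' w, MStepR E R v' w ∧ E w u' ∧ R v w ∧ R u u'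

/-- Stuttering bisimilarity: union of all stuttering bisimulations. -/
def StutBisim {V : Type u} (E : V → V → Prop) (prio : V → ℕ) (owner : V → Bool)
    (v v' : V) : Prop :=
  ∃ R, IsStutBisim E prio owner R ∧ R v v'

/-- `R` is a strong bisimulation on the parity game. -/
def IsStrongBisim {V : Type u} (E : V → V → Prop) (prio : V → ℕ) (owner : V → Bool)
    (R : V → V → Prop) : Prop :=
  Symmetric R ∧ ∀ v v', R v v' →
    prio v = prio v' ∧ owner v = owner v' ∧
    ∀ w, E v w → ∃ w', E v' w' ∧ R w w'

/-- Strong bisimilarity. -/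
def StrongBisim {V : Type u} (E : V → V → Prop) (prio : V → ℕ) (owner : V → Bool)
    (v v' : V) : Prop :=
  ∃ R, IsStrongBisim E prio owner R ∧ R v v'

/-- The list `[p 0, …, p n]`. -/
def prefixList {V : Type u} (p : ℕ → V) (n : ℕ) : List V := (List.range (n + 1)).map p

/-- `p` is an infinite play starting at `v`. -/
def IsPlay {V : Type u} (E : V → V → Prop) (v : V) (p : ℕ → V) : Prop :=
  p 0 = v ∧ ∀ i, E (p i) (p (i + 1))

/-- Consistency of an infinite play with a strategy `φ` of player `i`. -/
def ConsInf {V : Type u} (owner : V → Bool) (i : Bool) (φ : List V → Option V)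
    (p : ℕ → V) : Prop :=
  ∀ n, owner (p n) = i → ∀ u, φ (prefixList p n) = some u → p (n + 1) = u

/-- Consistency of a finite play (as a list) with a strategy `φ` of player `i`. -/
def ConsL {V : Type u} (owner : V → Bool) (i : Bool) (φ : List V → Option V)
    (q : List V) : Prop :=
  ∀ l₁ (x y : V) l₂, q = l₁ ++ x :: y :: l₂ → owner x = i →
    ∀ u, φ (l₁ ++ [x]) = some u → y = u

/-- Priorities occurring infinitely often along a play. -/
def infPrios {V : Type u} (prio : V → ℕ) (p : ℕ → V) : Set ℕ :=
  {k | ∀ N, ∃ n ≥ N, prio (p n) = k}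

/-- Player `i` wins the play `p` (player `false` = even wins iff the least
priority occurring infinitely often is even). -/
def WinsPlay {V : Type u} (prio : V → ℕ) (i : Bool) (p : ℕ → V) : Prop :=
  Even (sInf (infPrios prio p)) ↔ i = false

/-- `φ` is a (total, edge-respecting) strategy for player `i`. -/
def Strat {V : Type u} (E : V → V → Prop) (owner : V → Bool) (i : Bool)
    (φ : List V → Option V) : Prop :=
  ∀ (l : List V) (x : V), owner x = i → ∃ u, φ (l ++ [x]) = some u ∧ E x u

/-- `φ` is winning for player `i` from `v`. -/
def WinStrat {V : Type u} (E : V → V → Prop) (prio : V → ℕ) (owner : V → Bool)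
    (i : Bool) (φ : List V → Option V) (v : V) : Prop :=
  ∀ p, IsPlay E v p → ConsInf owner i φ p → WinsPlay prio i p

/-- Vertex `v` is won by player `i`. -/
def WonBy {V : Type u} (E : V → V → Prop) (prio : V → ℕ) (owner : V → Bool)
    (i : Bool) (v : V) : Prop :=
  ∃ φ, Strat E owner i φ ∧ WinStrat E prio owner i φ v

/-- Drop elements `R`-related to the last kept one. -/
noncomputable def collapseAux {V : Type u} (R : V → V → Prop) : V → List V → List V
  | _, [] => []
  | a, b :: l => if R a b then collapseAux R a l else b :: collapseAux R b l

/-- Collapse adjacent `R`-related elements, keeping one representative per block. -/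
noncomputable def collapse {V : Type u} (R : V → V → Prop) : List V → List V
  | [] => []
  | a :: l => a :: collapseAux R a l

/-- Stuttering equivalence of finite paths: same sequence of `≃`-classes. -/
def ListStutEq {V : Type u} (E : V → V → Prop) (prio : V → ℕ) (owner : V → Bool)
    (p q : List V) : Prop :=
  List.Forall₂ (StutBisim E prio owner)
    (collapse (StutBisim E prio owner) p) (collapse (StutBisim E prio owner) q)

/-- Stuttering equivalence of infinite paths: every finite prefix of one has a
stuttering equivalent finite prefix of the other, and vice versa. -/
def InfPathEq {V : Type u} (E : V → V → Prop) (prio : V → ℕ) (owner : V → Bool)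
    (p q : ℕ → V) : Prop :=
  (∀ n, ∃ m, ListStutEq E prio owner (prefixList p n) (prefixList q m)) ∧
  (∀ m, ∃ n, ListStutEq E prio owner (prefixList p n) (prefixList q m))

/-- `edgeN E n v u`: there is a path of exactly `n` edges from `v` to `u`. -/
def edgeN {V : Type u} (E : V → V → Prop) : ℕ → V → V → Prop
  | 0 => Eq
  | n + 1 => fun v u => ∃ w, E v w ∧ edgeN E n w u

/-- `|v,u|`: graph distance (∞ if unreachable). -/
noncomputable def distE {V : Type u} (E : V → V → Prop) (v u : V) : ℕ∞ :=
  sInf {x : ℕ∞ | ∃ n : ℕ, x = (n : ℕ∞) ∧ edgeN E n v u}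

/-- `v ≺_u v'`: proximity order towards `u`, refined by a base order `lt`. -/
def proxLt {V : Type u} (E : V → V → Prop) (lt : V → V → Prop) (u v v' : V) : Prop :=
  distE E v u < distE E v' u ∨ (distE E v u = distE E v' u ∧ lt v v')

/-- The minimum of a set under a strict total order `r` (junk if none exists). -/
noncomputable def minUnder {V : Type u} [Nonempty V] (r : V → V → Prop) (s : Set V) : V :=
  if h : ∃ m ∈ s, ∀ x ∈ s, x ≠ m → r m x then h.choose else Classical.choice inferInstance

/-- `Entry_{φ,v}(p)`: vertices of new classes reachable by `φ`-consistent paths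
from `v` stuttering equivalent to `p`. -/
def Entry {V : Type u} (E : V → V → Prop) (prio : V → ℕ) (owner : V → Bool) (i : Bool)
    (φ : List V → Option V) (v : V) (p : List V) : Set V :=
  { u | ∃ q : List V, q.Chain' E ∧ q.head? = some v ∧ ConsL owner i φ q ∧
      ListStutEq E prio owner p q ∧ (q ++ [u]).Chain' E ∧ ConsL owner i φ (q ++ [u]) ∧
      ¬ ListStutEq E prio owner (q ++ [u]) q }

/-- `target_{φ,v}(p)`: the chosen target vertex. -/
noncomputable def targetVertex {V : Type u} [Nonempty V] (E : V → V → Prop) (prio : V → ℕ)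
    (owner : V → Bool) (lt : V → V → Prop) (i : Bool) (φ : List V → Option V)
    (v : V) (p : List V) : V :=
  minUnder lt { u | StutBisim E prio owner u (minUnder lt (Entry E prio owner i φ v p)) ∧
    ∃ w x, p.getLast? = some x ∧ MStepR E (StutBisim E prio owner) x w ∧ E w u }

/-- The mimicking strategy `mimick_{φ,v}`. -/
noncomputable def mimick {V : Type u} [Nonempty V] (E : V → V → Prop) (prio : V → ℕ)
    (owner : V → Bool) (lt : V → V → Prop) (i : Bool) (φ : List V → Option V) (v : V) :
    List V → Option V :=
  fun p =>
    let x := p.getLast?.getD (Classical.choice inferInstance)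
    if Entry E prio owner i φ v p = ∅ then
      some (minUnder lt { u | E x u ∧ StutBisim E prio owner x u })
    else
      let t := targetVertex E prio owner lt i φ v p
      if E x t then some t
      else some (minUnder (proxLt E lt t) { u | E x u ∧ StutBisim E prio owner x u })

/-- Winner equivalence. -/
def WinEq {V : Type u} (E : V → V → Prop) (prio : V → ℕ) (owner : V → Bool)
    (v v' : V) : Prop :=
  ∀ i : Bool, WonBy E prio owner i v ↔ WonBy E prio owner i v'

section StrongAux

variable {V : Type u}

lemma prefixList_succ' (p : ℕ → V) (n : ℕ) :
    prefixList p (n + 1) = prefixList p n ++ [p (n + 1)] := by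
  simp [prefixList, List.range_succ]

lemma prefixList_eq_snoc' (p : ℕ → V) (n : ℕ) :
    prefixList p n = (List.range n).map p ++ [p n] := by
  simp [prefixList, List.range_succ]

lemma prefixList_getLast' (p : ℕ → V) (n : ℕ) (j : V) :
    (prefixList p n).getLast?.getD j = p n := by
  rw [prefixList_eq_snoc']; simp

lemma prefixList_ne_nil' (p : ℕ → V) (n : ℕ) : prefixList p n ≠ [] := by
  simp [prefixList]

lemma prefixList_zero' (p : ℕ → V) : prefixList p 0 = [p 0] := by
  simp [prefixList, List.range_succ]

/-- One step of the shadow construction. -/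
noncomputable def stepSh (E R : V → V → Prop) (owner : V → Bool) (i : Bool)
    (φ : List V → Option V) (v : V) (acc : List V) (y' : V) : V :=
  if owner (acc.getLast?.getD v) = i then (φ acc).getD v
  else if h : ∃ w, E (acc.getLast?.getD v) w ∧ R w y' then h.choose else v

lemma stepSh_pos (E R : V → V → Prop) (owner : V → Bool) (i : Bool)
    (φ : List V → Option V) (v : V) (acc : List V) (y' : V) (u0 : V)
    (h1 : owner (acc.getLast?.getD v) = i) (h2 : φ acc = some u0) :
    stepSh E R owner i φ v acc y' = u0 := by
  unfold stepSh; rw [if_pos h1, h2]; rfl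

lemma stepSh_neg (E R : V → V → Prop) (owner : V → Bool) (i : Bool)
    (φ : List V → Option V) (v : V) (acc : List V) (y' : V)
    (h1 : ¬ owner (acc.getLast?.getD v) = i)
    (hex : ∃ w, E (acc.getLast?.getD v) w ∧ R w y') :
    E (acc.getLast?.getD v) (stepSh E R owner i φ v acc y') ∧
      R (stepSh E R owner i φ v acc y') y' := by
  unfold stepSh; rw [if_neg h1, dif_pos hex]; exact hex.choose_spec

noncomputable def shadowGo (E R : V → V → Prop) (owner : V → Bool) (i : Bool)
    (φ : List V → Option V) (v : V) : List V → List V → List V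
  | acc, [] => acc
  | acc, y' :: t =>
      shadowGo E R owner i φ v (acc ++ [stepSh E R owner i φ v acc y']) t

noncomputable def shadow (E R : V → V → Prop) (owner : V → Bool) (i : Bool)
    (φ : List V → Option V) (v : V) : List V → List V
  | [] => []
  | _ :: t => shadowGo E R owner i φ v [v] t

lemma shadowGo_snoc (E R : V → V → Prop) (owner : V → Bool) (i : Bool)
    (φ : List V → Option V) (v : V) (y' : V) :
    ∀ (t acc : List V),
      shadowGo E R owner i φ v acc (t ++ [y']) =
        shadowGo E R owner i φ v acc t ++
          [stepSh E R owner i φ v (shadowGo E R owner i φ v acc t) y'] := by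
  intro t
  induction t with
  | nil => intro acc; simp [shadowGo]
  | cons a t ih => intro acc; simp only [List.cons_append, shadowGo]; exact ih _

lemma shadow_snoc (E R : V → V → Prop) (owner : V → Bool) (i : Bool)
    (φ : List V → Option V) (v : V) (q : List V) (hq : q ≠ []) (y' : V) :
    shadow E R owner i φ v (q ++ [y']) =
      shadow E R owner i φ v q ++
        [stepSh E R owner i φ v (shadow E R owner i φ v q) y'] := by
  cases q with
  | nil => exact absurd rfl hq
  | cons a t => simp only [List.cons_append, shadow]; exact shadowGo_snoc E R owner i φ v y' t [v]

/-- The mimicking strategy for strong bisimulation. -/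
noncomputable def psiSh (E R : V → V → Prop) (owner : V → Bool) (i : Bool)
    (φ : List V → Option V) (v : V) (hE : ∀ a, ∃ b, E a b) : List V → Option V :=
  fun q =>
    if h : ∃ u', E (q.getLast?.getD v) u' ∧
        R ((φ (shadow E R owner i φ v q)).getD v) u' then some h.choose
    else some (hE (q.getLast?.getD v)).choose

lemma psiSh_spec_pos (E R : V → V → Prop) (owner : V → Bool) (i : Bool)
    (φ : List V → Option V) (v : V) (hE : ∀ a, ∃ b, E a b) (q : List V)
    (hcq : ∃ u', E (q.getLast?.getD v) u' ∧
        R ((φ (shadow E R owner i φ v q)).getD v) u') :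
    ∃ u'', psiSh E R owner i φ v hE q = some u'' ∧ E (q.getLast?.getD v) u'' ∧
      R ((φ (shadow E R owner i φ v q)).getD v) u'' :=
  ⟨hcq.choose, dif_pos hcq, hcq.choose_spec⟩

lemma psiSh_spec_neg (E R : V → V → Prop) (owner : V → Bool) (i : Bool)
    (φ : List V → Option V) (v : V) (hE : ∀ a, ∃ b, E a b) (q : List V)
    (hcq : ¬ ∃ u', E (q.getLast?.getD v) u' ∧
        R ((φ (shadow E R owner i φ v q)).getD v) u') :
    ∃ u'', psiSh E R owner i φ v hE q = some u'' ∧ E (q.getLast?.getD v) u'' :=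
  ⟨(hE (q.getLast?.getD v)).choose, dif_neg hcq, (hE (q.getLast?.getD v)).choose_spec⟩

lemma strongBisim_transfer (E : V → V → Prop) (hE : ∀ a, ∃ b, E a b)
    (prio : V → ℕ) (owner : V → Bool) (R : V → V → Prop)
    (hR : IsStrongBisim E prio owner R) (v v' : V) (hvv' : R v v')
    (i : Bool) (φ : List V → Option V) (hφ : Strat E owner i φ)
    (hw : WinStrat E prio owner i φ v) :
    ∃ ψ, Strat E owner i ψ ∧ WinStrat E prio owner i ψ v' := by
  classical
  refine ⟨psiSh E R owner i φ v hE, ?_, ?_⟩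
  · -- Strat
    intro l x hx
    have e : (l ++ [x]).getLast?.getD v = x := by simp
    by_cases hcq : ∃ u', E ((l ++ [x]).getLast?.getD v) u' ∧
        R ((φ (shadow E R owner i φ v (l ++ [x]))).getD v) u'
    · obtain ⟨u'', h1, h2, _⟩ := psiSh_spec_pos E R owner i φ v hE (l ++ [x]) hcq
      exact ⟨u'', h1, by rwa [e] at h2⟩
    · obtain ⟨u'', h1, h2⟩ := psiSh_spec_neg E R owner i φ v hE (l ++ [x]) hcq
      exact ⟨u'', h1, by rwa [e] at h2⟩
  · -- WinStrat
    intro p' hplay' hcons'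
    set p : ℕ → V :=
      fun n => ((shadow E R owner i φ v (prefixList p' n)).getLast?).getD v with hpdef
    have hstep : ∀ n, shadow E R owner i φ v (prefixList p' n) = prefixList p n →
        R (p n) (p' n) →
        shadow E R owner i φ v (prefixList p' (n + 1)) = prefixList p (n + 1) ∧
        R (p (n + 1)) (p' (n + 1)) ∧ E (p n) (p (n + 1)) ∧
        (owner (p n) = i → ∀ u, φ (prefixList p n) = some u → p (n + 1) = u) := by
      intro n hsh hrn
      have hsnoc := shadow_snoc E R owner i φ v (prefixList p' n)
        (prefixList_ne_nil' p' n) (p' (n + 1))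
      rw [hsh] at hsnoc
      have hsh1 : shadow E R owner i φ v (prefixList p' (n + 1)) =
          prefixList p n ++ [stepSh E R owner i φ v (prefixList p n) (p' (n + 1))] := by
        rw [prefixList_succ', hsnoc]
      have hp1 : p (n + 1) = stepSh E R owner i φ v (prefixList p n) (p' (n + 1)) := by
        show ((shadow E R owner i φ v (prefixList p' (n + 1))).getLast?).getD v = _
        rw [hsh1]; simp
      have hshfull : shadow E R owner i φ v (prefixList p' (n + 1)) = prefixList p (n + 1) := by
        rw [hsh1, prefixList_succ', hp1]
      have hx : (prefixList p n).getLast?.getD v = p n := prefixList_getLast' p n v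
      by_cases hown : owner (p n) = i
      · -- player i moves
        obtain ⟨u0, hu0, hEu0⟩ : ∃ u0, φ (prefixList p n) = some u0 ∧ E (p n) u0 := by
          have := hφ ((List.range n).map p) (p n) hown
          rwa [← prefixList_eq_snoc'] at this
        have hown' : owner (p' n) = i := by
          rw [← (hR.2 _ _ hrn).2.1]; exact hown
        have hc : ∃ u', E ((prefixList p' n).getLast?.getD v) u' ∧
            R ((φ (shadow E R owner i φ v (prefixList p' n))).getD v) u' := by
          rw [prefixList_getLast' p' n v, hsh, hu0]
          obtain ⟨w', hw1, hw2⟩ := (hR.2 _ _ hrn).2.2 u0 hEu0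
          exact ⟨w', hw1, hw2⟩
        obtain ⟨u'', hψval, hspecE, hspecR⟩ :=
          psiSh_spec_pos E R owner i φ v hE (prefixList p' n) hc
        rw [hsh, hu0] at hspecR
        have hspecR' : R u0 u'' := hspecR
        have hpnext : p' (n + 1) = u'' := hcons' n hown' u'' hψval
        have hown2 : owner ((prefixList p n).getLast?.getD v) = i := by rw [hx]; exact hown
        have hpn1 : p (n + 1) = u0 :=
          hp1.trans (stepSh_pos E R owner i φ v (prefixList p n) (p' (n + 1)) u0 hown2 hu0)
        refine ⟨hshfull, ?_, ?_, ?_⟩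
        · rw [hpn1, hpnext]; exact hspecR'
        · rw [hpn1]; exact hEu0
        · intro _ u hu; rw [hpn1]; rw [hu0] at hu; exact Option.some.inj hu
      · -- opponent moves
        have hE' : E (p' n) (p' (n + 1)) := hplay'.2 n
        have hown2 : ¬ owner ((prefixList p n).getLast?.getD v) = i := by rw [hx]; exact hown
        have hex : ∃ w, E ((prefixList p n).getLast?.getD v) w ∧ R w (p' (n + 1)) := by
          rw [hx]
          obtain ⟨w', h1, h2⟩ := (hR.2 _ _ (hR.1 hrn)).2.2 (p' (n + 1)) hE'
          exact ⟨w', h1, hR.1 h2⟩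
        have hs := stepSh_neg E R owner i φ v (prefixList p n) (p' (n + 1)) hown2 hex
        rw [hx] at hs
        refine ⟨hshfull, ?_, ?_, ?_⟩
        · rw [hp1]; exact hs.2
        · rw [hp1]; exact hs.1
        · intro hcon; exact absurd hcon hown
    have base0 : shadow E R owner i φ v (prefixList p' 0) = prefixList p 0 ∧ p 0 = v := by
      have hsh0 : shadow E R owner i φ v (prefixList p' 0) = [v] := by
        rw [prefixList_zero']; simp [shadow, shadowGo]
      have hp0 : p 0 = v := by
        show ((shadow E R owner i φ v (prefixList p' 0)).getLast?).getD v = v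
        rw [hsh0]; simp
      refine ⟨?_, hp0⟩
      rw [hsh0, prefixList_zero' p, hp0]
    have key : ∀ n, shadow E R owner i φ v (prefixList p' n) = prefixList p n ∧
        R (p n) (p' n) := by
      intro n
      induction n with
      | zero =>
        refine ⟨base0.1, ?_⟩
        rw [base0.2, hplay'.1]; exact hvv'
      | succ n ih => exact ⟨(hstep n ih.1 ih.2).1, (hstep n ih.1 ih.2).2.1⟩
    have hplayp : IsPlay E v p :=
      ⟨base0.2, fun n => (hstep n (key n).1 (key n).2).2.2.1⟩
    have hconsp : ConsInf owner i φ p :=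
      fun n hown u hu => (hstep n (key n).1 (key n).2).2.2.2 hown u hu
    have hwins := hw p hplayp hconsp
    have hprioeq : ∀ n, prio (p n) = prio (p' n) := fun n => (hR.2 _ _ (key n).2).1
    have hinfeq : infPrios prio p = infPrios prio p' := by
      ext k
      simp only [infPrios, Set.mem_setOf_eq]
      constructor <;> intro hk N <;> obtain ⟨n, h1, h2⟩ := hk N
      · exact ⟨n, h1, by rw [← hprioeq n]; exact h2⟩
      · exact ⟨n, h1, by rw [hprioeq n]; exact h2⟩
    unfold WinsPlay at hwins ⊢
    rwa [← hinfeq]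

end StrongAux

/-- strong bisimilarity is finer than winner equivalence, and a
winning strategy from `v` yields a winning strategy from `v'`. -/
theorem strongBisim_finer_than_winner_equivalence {V : Type u} [Fintype V]
    (E : V → V → Prop) (hE : ∀ a, ∃ b, E a b) (prio : V → ℕ) (owner : V → Bool)
    (v v' : V) (h : StrongBisim E prio owner v v') :
    (∀ i : Bool, WonBy E prio owner i v ↔ WonBy E prio owner i v') ∧
    (∀ (i : Bool) (φ : List V → Option V),
      Strat E owner i φ → WinStrat E prio owner i φ v →
      ∃ ψ, Strat E owner i ψ ∧ WinStrat E prio owner i ψ v') := by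
  obtain ⟨R, hR, hvv'⟩ := h
  have hsymm : R v' v := hR.1 hvv'
  constructor
  · intro i
    constructor
    · rintro ⟨φ, h1, h2⟩
      exact strongBisim_transfer E hE prio owner R hR v v' hvv' i φ h1 h2
    · rintro ⟨φ, h1, h2⟩
      exact strongBisim_transfer E hE prio owner R hR v' v hsymm i φ h1 h2
  · intro i φ h1 h2
    exact strongBisim_transfer E hE prio owner R hR v v' hvv' i φ h1 h2
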